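/- Fix p ∈ (0,1), η > 0, ν ∈ ℝ, δ > 0, τ > 0. A point (A, ζ) with A > 0 satisfies g₁(A,ζ) = g₂(A,ζ) = 0 if and only if (p²η/8)A²(1 − pA²) = δ and ζ = pν + δ + (p²η/8)A². Such nontrivial equilibria exist if and only if δ ≤ pη/32, in which case their ζ-coordinates are exactly ζ = pν + δ + (pη + √(p²η² − 32pηδ))/16 and ζ = pν + δ + (pη − √(p²η² − 32pηδ))/16 (equivalently, as stated in the paper, ζ = pν + δ + (pη ± √p·√(pη² − 32ηδ))/16). -/

import Mathlib

/-- Slow-flow amplitude dynamics for a general network with a single nonlinear node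
(small linear damping). -/
noncomputable def g₁ (p ν η A ζ : ℝ) : ℝ :=
  (1 / 2) * ((p * ν - ζ) * A + (p ^ 2 * η / 4) * A ^ 3 - (p ^ 3 * η / 8) * A ^ 5)

/-- Proposed autonomous damping dynamics for a general network. -/
noncomputable def g₂ (p ν η δ τ A ζ : ℝ) : ℝ :=
  τ⁻¹ * (-ζ + δ + p * ν + (p ^ 2 * η / 8) * A ^ 2)

/-!
Eliminating `ζ` through `g₂ = 0` and dividing `g₁ = 0` by `A` leaves
`(p²η/8) A² (1 - p A²) = δ`. In the variable `u = (p²η/8) A²`, which is the offset of `ζ`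
from `pν + δ`, this is the quadratic `8u² - pη u + pηδ = 0`. Its discriminant is
`p²η² - 32pηδ`, and when it is nonnegative both roots are positive because their sum and
product are; each positive `u` comes from exactly one amplitude `A > 0`.
-/

theorem g₁_eq_zero_and_g₂_eq_zero_iff {p ν η δ τ A ζ : ℝ} (hτ : τ ≠ 0) (hA : A ≠ 0) :
    g₁ p ν η A ζ = 0 ∧ g₂ p ν η δ τ A ζ = 0 ↔
      (p ^ 2 * η / 8) * A ^ 2 * (1 - p * A ^ 2) = δ ∧
        ζ = p * ν + δ + (p ^ 2 * η / 8) * A ^ 2 := by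
  have hg₂ : g₂ p ν η δ τ A ζ = 0 ↔ ζ = p * ν + δ + (p ^ 2 * η / 8) * A ^ 2 := by
    rw [g₂, mul_eq_zero, or_iff_right (inv_ne_zero hτ)]
    constructor <;> intro h <;> linarith
  rw [hg₂, and_congr_left_iff]
  rintro rfl
  have hg₁ : g₁ p ν η A (p * ν + δ + (p ^ 2 * η / 8) * A ^ 2) =
      -(A / 2) * (δ - (p ^ 2 * η / 8) * A ^ 2 * (1 - p * A ^ 2)) := by
    rw [g₁]; ring
  rw [hg₁, mul_eq_zero, or_iff_right (by simpa using hA), sub_eq_zero, eq_comm]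

theorem amplitude_eq_iff_quadratic {p η δ A : ℝ} (hp : p ≠ 0) (hη : η ≠ 0) :
    (p ^ 2 * η / 8) * A ^ 2 * (1 - p * A ^ 2) = δ ↔
      8 * ((p ^ 2 * η / 8) * A ^ 2) ^ 2 - p * η * ((p ^ 2 * η / 8) * A ^ 2) + p * η * δ = 0 := by
  have hpη : p * η ≠ 0 := mul_ne_zero hp hη
  rw [← mul_right_inj' hpη, ← sub_eq_zero, eq_comm]
  constructor <;> intro h <;> linear_combination h

section Quadratic

variable {b δ : ℝ}

theorem le_div_of_quadratic_eq_zero (hb : 0 < b) {u : ℝ} (hu : 8 * u ^ 2 - b * u + b * δ = 0) :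
    δ ≤ b / 32 := by
  have hdisc : 0 ≤ b * (b - 32 * δ) := by nlinarith [sq_nonneg (16 * u - b)]
  linarith [(mul_nonneg_iff_of_pos_left hb).mp hdisc]

theorem quadratic_eq_zero_iff_of_discrim_nonneg (hdisc : 0 ≤ b ^ 2 - 32 * b * δ) (u : ℝ) :
    8 * u ^ 2 - b * u + b * δ = 0 ↔
      u = (b + √(b ^ 2 - 32 * b * δ)) / 16 ∨ u = (b - √(b ^ 2 - 32 * b * δ)) / 16 := by
  have hs : discrim 8 (-b) (b * δ) = √(b ^ 2 - 32 * b * δ) * √(b ^ 2 - 32 * b * δ) := by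
    rw [Real.mul_self_sqrt hdisc, discrim]; ring
  rw [show 8 * u ^ 2 - b * u + b * δ = 8 * (u * u) + -b * u + b * δ by ring,
    quadratic_eq_zero_iff (by norm_num) hs u]
  norm_num

theorem setOf_pos_quadratic_eq_zero (hb : 0 < b) (hδ : 0 < δ) (hdisc : 0 ≤ b ^ 2 - 32 * b * δ) :
    {u : ℝ | 0 < u ∧ 8 * u ^ 2 - b * u + b * δ = 0} =
      {(b + √(b ^ 2 - 32 * b * δ)) / 16, (b - √(b ^ 2 - 32 * b * δ)) / 16} := by
  have hs : √(b ^ 2 - 32 * b * δ) < b :=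
    (Real.sqrt_lt' hb).mpr (by nlinarith [mul_pos hb hδ])
  have hs₀ : 0 ≤ √(b ^ 2 - 32 * b * δ) := Real.sqrt_nonneg _
  ext u
  simp only [Set.mem_ofPred_eq, Set.mem_insert_iff, Set.mem_singleton_iff,
    quadratic_eq_zero_iff_of_discrim_nonneg hdisc]
  constructor
  · exact fun h ↦ h.2
  · rintro (rfl | rfl) <;> refine ⟨by linarith, by simp⟩

theorem setOf_pos_quadratic_eq_zero_nonempty_iff (hb : 0 < b) :
    {u : ℝ | 0 < u ∧ 8 * u ^ 2 - b * u + b * δ = 0}.Nonempty ↔ δ ≤ b / 32 := by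
  refine ⟨fun ⟨u, _, hu⟩ ↦ le_div_of_quadratic_eq_zero hb hu, fun h ↦ ?_⟩
  have hdisc : 0 ≤ b ^ 2 - 32 * b * δ := by nlinarith
  refine ⟨(b + √(b ^ 2 - 32 * b * δ)) / 16, by positivity, ?_⟩
  exact (quadratic_eq_zero_iff_of_discrim_nonneg hdisc _).mpr (Or.inl rfl)

end Quadratic

theorem setOf_equilibrium_ζ_eq_image {p ν η δ τ : ℝ} (hp : 0 < p) (hη : 0 < η) (hτ : τ ≠ 0) :
    {ζ : ℝ | ∃ A : ℝ, 0 < A ∧ g₁ p ν η A ζ = 0 ∧ g₂ p ν η δ τ A ζ = 0} =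
      (fun u ↦ p * ν + δ + u) '' {u : ℝ | 0 < u ∧ 8 * u ^ 2 - p * η * u + p * η * δ = 0} := by
  have hc : 0 < p ^ 2 * η / 8 := by positivity
  ext ζ
  simp only [Set.mem_ofPred_eq, Set.mem_image]
  constructor
  · rintro ⟨A, hA, hg⟩
    obtain ⟨hamp, rfl⟩ := (g₁_eq_zero_and_g₂_eq_zero_iff hτ hA.ne').mp hg
    exact ⟨_, ⟨by positivity, (amplitude_eq_iff_quadratic hp.ne' hη.ne').mp hamp⟩, rfl⟩
  · rintro ⟨u, ⟨hu, hquad⟩, rfl⟩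
    have hcA : (p ^ 2 * η / 8) * √(u / (p ^ 2 * η / 8)) ^ 2 = u := by
      rw [Real.sq_sqrt (by positivity)]; field_simp
    refine ⟨_, Real.sqrt_pos.mpr (by positivity),
      (g₁_eq_zero_and_g₂_eq_zero_iff hτ (Real.sqrt_pos.mpr (by positivity)).ne').mpr
        ⟨(amplitude_eq_iff_quadratic hp.ne' hη.ne').mpr (hcA ▸ hquad), by rw [hcA]⟩⟩

/-- Characterization of the nontrivial equilibria of the coupled amplitude–damping
dynamics: they exist iff `δ ≤ pη/32`, with the stated `ζ`-coordinates. -/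
theorem stmt_10 (p η ν δ τ : ℝ) (hp : p ∈ Set.Ioo (0 : ℝ) 1) (hη : 0 < η)
    (hδ : 0 < δ) (hτ : 0 < τ) :
    (∀ A ζ : ℝ, 0 < A →
      (g₁ p ν η A ζ = 0 ∧ g₂ p ν η δ τ A ζ = 0 ↔
        (p ^ 2 * η / 8) * A ^ 2 * (1 - p * A ^ 2) = δ ∧
          ζ = p * ν + δ + (p ^ 2 * η / 8) * A ^ 2)) ∧
    ((∃ A ζ : ℝ, 0 < A ∧ g₁ p ν η A ζ = 0 ∧ g₂ p ν η δ τ A ζ = 0) ↔ δ ≤ p * η / 32) ∧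
    (δ ≤ p * η / 32 →
      {ζ : ℝ | ∃ A : ℝ, 0 < A ∧ g₁ p ν η A ζ = 0 ∧ g₂ p ν η δ τ A ζ = 0} =
        {p * ν + δ + (p * η + Real.sqrt (p ^ 2 * η ^ 2 - 32 * p * η * δ)) / 16,
         p * ν + δ + (p * η - Real.sqrt (p ^ 2 * η ^ 2 - 32 * p * η * δ)) / 16}) := by
  obtain ⟨hp₀, -⟩ := hp
  have hpη : 0 < p * η := mul_pos hp₀ hη
  have hE := setOf_equilibrium_ζ_eq_image (ν := ν) (δ := δ) hp₀ hη hτ.ne'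
  refine ⟨fun A ζ hA ↦ g₁_eq_zero_and_g₂_eq_zero_iff hτ.ne' hA.ne', ?_, fun h ↦ ?_⟩
  · rw [← setOf_pos_quadratic_eq_zero_nonempty_iff hpη,
      ← Set.image_nonempty (f := fun u ↦ p * ν + δ + u), ← hE, exists_comm]
    rfl
  · have hdisc : (p * η) ^ 2 - 32 * (p * η) * δ = p ^ 2 * η ^ 2 - 32 * p * η * δ := by ring
    rw [hE, setOf_pos_quadratic_eq_zero hpη hδ (by nlinarith), Set.image_pair, hdisc]
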